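/- arXiv:math/0501334 — 2 statements merged into one kernel-verified Lean document; each statement's English description precedes it below -/
import Mathlib

section
/- Let θ be an automorphism of a reductive group G of finite order m with p ∤ m, and let T be a θ-stable torus with 𝔱 = Lie(T) and 𝔱' = Lie(T ∩ G^(1)). Then there exists a θ-stable toral subalgebra 𝔰 such that 𝔱 = 𝔱' ⊕ 𝔰. Moreover if m divides p−1, then 𝔰 admits a basis of toral elements (t^[p] = t) that are eigenvectors for dθ. -/
open Finset Submodule



/-- The prime subfield of a field of characteristic `p`, realized as the fixed
points of the Frobenius. -/
def frobFixed (k : Type*) [Field k] (p : ℕ) [Fact p.Prime] [CharP k p] : Subfield k where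
  carrier := {c | c ^ p = c}
  mul_mem' := by
    intro a b ha hb
    simp only [Set.mem_setOf_eq] at *
    rw [mul_pow, ha, hb]
  one_mem' := one_pow p
  add_mem' := by
    intro a b ha hb
    simp only [Set.mem_setOf_eq] at *
    rw [add_pow_char, ha, hb]
  zero_mem' := zero_pow (Fact.out : p.Prime).pos.ne'
  neg_mem' := by
    intro a ha
    simp only [Set.mem_setOf_eq] at *
    rw [show (-a) = (-1) * a by ring, mul_pow, neg_one_pow_char, ha]
  inv_mem' := by
    intro a ha
    simp only [Set.mem_setOf_eq] at *
    rw [inv_pow, ha]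

theorem mem_frobFixed {k : Type*} [Field k] {p : ℕ} [Fact p.Prime] [CharP k p] {c : k} :
    c ∈ frobFixed k p ↔ c ^ p = c := Iff.rfl

section Aux

variable {k L : Type*} [Field k] [LieRing L] [LieAlgebra k L]
  (p : ℕ) (hp0 : p ≠ 0) (pOp : L → L)
  (hpAdd : ∀ x y : L, ⁅x, y⁆ = 0 → pOp (x + y) = pOp x + pOp y)
  (hpSmul : ∀ (c : k) (x : L), pOp (c • x) = c ^ p • pOp x)

include hp0 hpSmul in
theorem pOp_zero : pOp 0 = 0 := by
  have h := hpSmul 0 0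
  rwa [zero_smul, zero_pow hp0, zero_smul] at h

include hp0 hpAdd hpSmul in
theorem pOp_sum (t : Submodule k L) (hab : ∀ x ∈ t, ∀ y ∈ t, ⁅x, y⁆ = (0 : L))
    {ι : Type*} (x : ι → L) (hx : ∀ i, x i ∈ t) (s : Finset ι) (c : ι → k) :
    pOp (∑ i ∈ s, c i • x i) = ∑ i ∈ s, (c i) ^ p • pOp (x i) := by
  classical
  induction s using Finset.induction_on with
  | empty => simpa using pOp_zero p hp0 pOp hpSmul
  | insert _ _ hnotmem ih =>
      rename_i a s
      rw [Finset.sum_insert hnotmem, Finset.sum_insert hnotmem, ← ih]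
      have h1 : c a • x a ∈ t := t.smul_mem _ (hx a)
      have h2 : (∑ i ∈ s, c i • x i) ∈ t := t.sum_mem fun i _ => t.smul_mem _ (hx i)
      rw [hpAdd _ _ (hab _ h1 _ h2), hpSmul]

include hp0 hpAdd hpSmul in
/-- Descent: a family of commuting toral elements that is linearly independent over
the prime subfield is linearly independent over `k`. -/
theorem descent (t : Submodule k L) (hab : ∀ x ∈ t, ∀ y ∈ t, ⁅x, y⁆ = (0 : L))
    (F : Subfield k) (hF : ∀ c : k, c ∈ F ↔ c ^ p = c)
    {ι : Type*} (x : ι → L) (hx : ∀ i, x i ∈ t) (hxt : ∀ i, pOp (x i) = x i)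
    (hli : LinearIndependent F x) : LinearIndependent k x := by
  classical
  have hsum : ∀ (s : Finset ι) (c : ι → k), (∑ i ∈ s, c i • x i) = 0 →
      pOp (∑ i ∈ s, c i • x i) = ∑ i ∈ s, (c i) ^ p • x i := by
    intro s c _
    rw [pOp_sum p hp0 pOp hpAdd hpSmul t hab x hx s c]
    exact Finset.sum_congr rfl fun i _ => by rw [hxt i]
  -- coefficients fixed by Frobenius must vanish
  have fixedCoeff : ∀ (s : Finset ι) (c : ι → k), (∑ i ∈ s, c i • x i) = 0 →
      (∀ i ∈ s, (c i) ^ p = c i) → ∀ i ∈ s, c i = 0 := by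
    intro s c hrel hfix i hi
    set r : ι → F := fun i => if h : (c i) ^ p = c i then (⟨c i, (hF _).2 h⟩ : F) else 0 with hr
    have hrel' : (∑ i ∈ s, r i • x i) = 0 := by
      rw [← hrel]
      refine Finset.sum_congr rfl fun j hj => ?_
      rw [hr]
      simp only [dif_pos (hfix j hj)]
      rw [Subfield.smul_def]
    have := linearIndependent_iff'.mp hli s r hrel' i hi
    have hri : r i = (⟨c i, (hF _).2 (hfix i hi)⟩ : F) := by rw [hr]; simp [dif_pos (hfix i hi)]
    rw [hri] at this
    exact congrArg Subtype.val this
  have main : ∀ (n : ℕ) (s : Finset ι) (c : ι → k), s.card ≤ n →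
      (∑ i ∈ s, c i • x i) = 0 → ∀ i ∈ s, c i = 0 := by
    intro n
    induction n with
    | zero =>
        intro s c hcard hrel i hi
        rw [Nat.le_zero, Finset.card_eq_zero] at hcard
        simp [hcard] at hi
    | succ n ih =>
        intro s c hcard hrel i hi
        by_cases hA : ∀ j ∈ s, (c j) ^ p = c j
        · exact fixedCoeff s c hrel hA i hi
        · push_neg at hA
          obtain ⟨i₀, hi₀s, hi₀⟩ := hA
          have hc0 : c i₀ ≠ 0 := by
            intro h
            exact hi₀ (by rw [h, zero_pow hp0])
          exfalso
          set d : ι → k := fun j => c j / c i₀ with hd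
          have hdsum : (∑ j ∈ s, d j • x j) = 0 := by
            have : (∑ j ∈ s, d j • x j) = (c i₀)⁻¹ • ∑ j ∈ s, c j • x j := by
              rw [Finset.smul_sum]
              refine Finset.sum_congr rfl fun j hj => ?_
              rw [smul_smul, hd]
              congr 1
              field_simp
            rw [this, hrel, smul_zero]
          have hpOpsum : (∑ j ∈ s, (d j) ^ p • x j) = 0 := by
            rw [← hsum s d hdsum, hdsum, pOp_zero p hp0 pOp hpSmul]
          have hdi₀ : d i₀ = 1 := div_self hc0
          have hsub : (∑ j ∈ s.erase i₀, ((d j) ^ p - d j) • x j) = 0 := by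
            have h1 : (∑ j ∈ s, ((d j) ^ p - d j) • x j) = 0 := by
              simp only [sub_smul, Finset.sum_sub_distrib, hpOpsum, hdsum, sub_zero]
            rw [← Finset.add_sum_erase _ _ hi₀s] at h1
            rw [hdi₀] at h1
            simpa using h1
          have herase := ih (s.erase i₀) (fun j => (d j) ^ p - d j)
            (by
              have := Finset.card_erase_of_mem hi₀s
              omega) hsub
          have hfix : ∀ j ∈ s, (d j) ^ p = d j := by
            intro j hj
            rcases eq_or_ne j i₀ with h | h
            · rw [h, hdi₀, one_pow]
            · exact sub_eq_zero.mp (herase j (Finset.mem_erase.mpr ⟨h, hj⟩))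
          have := fixedCoeff s d hdsum hfix i₀ hi₀s
          rw [hdi₀] at this
          exact one_ne_zero this
  rw [linearIndependent_iff']
  intro s c hrel i hi
  exact main s.card s c le_rfl hrel i hi

end Aux


/-- Maschke-type averaging: a stable subspace for an operator of finite order `m`
invertible in the field admits a stable complement. -/
theorem maschke_cyclic {F V : Type*} [Field F] [AddCommGroup V] [Module F V]
    (m : ℕ) (hm : 0 < m) (hmF : (m : F) ≠ 0)
    (ψ : V →ₗ[F] V) (hψm : ψ ^ m = 1)
    (W : Submodule F V) (hWψ : ∀ w ∈ W, ψ w ∈ W) :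
    ∃ S : Submodule F V, (∀ x ∈ S, ψ x ∈ S) ∧ W ⊓ S = ⊥ ∧ W ⊔ S = ⊤ := by
  classical
  set χ : V →ₗ[F] V := ψ ^ (m - 1) with hχ
  have hm1 : m - 1 + 1 = m := Nat.succ_pred_eq_of_pos hm
  have hψχ : ψ * χ = 1 := by rw [hχ, ← pow_succ', hm1, hψm]
  have hχψ : χ * ψ = 1 := by rw [hχ, ← pow_succ, hm1, hψm]
  have hχm : χ ^ m = 1 := by
    rw [hχ, ← pow_mul, mul_comm (m-1) m, pow_mul, hψm, one_pow]
  have hcomm : Commute ψ χ := (Commute.refl ψ).pow_right (m - 1)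
  have hψjχj : ∀ j : ℕ, (ψ ^ j) * (χ ^ j) = 1 := by
    intro j
    rw [← hcomm.mul_pow, hψχ, one_pow]
  have hsum_shift : ∀ (g : ℕ → (V →ₗ[F] V)), g m = g 0 →
      (∑ j ∈ Finset.range m, g (j+1)) = ∑ j ∈ Finset.range m, g j := by
    intro g hg
    conv_lhs => rw [← hm1, Finset.sum_range_succ]
    conv_rhs => rw [← hm1, Finset.sum_range_succ']
    rw [hm1, hg]
  have hWψpow : ∀ (j : ℕ) (w : V), w ∈ W → (ψ ^ j) w ∈ W := by
    intro j
    induction j with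
    | zero => intro w hw; simpa using hw
    | succ j ih =>
        intro w hw
        rw [pow_succ, Module.End.mul_apply]
        exact ih _ (hWψ w hw)
  have hWχpow : ∀ (j : ℕ) (w : V), w ∈ W → (χ ^ j) w ∈ W := by
    intro j w hw
    rw [hχ, ← pow_mul]
    exact hWψpow _ w hw
  obtain ⟨W₁, hcompl⟩ := Submodule.exists_isCompl W
  set q := W.projectionOnto W₁ hcompl with hq
  set p₀ : V →ₗ[F] V := W.subtype.comp q with hp₀
  have hp₀W : ∀ x : V, p₀ x ∈ W := fun x => (q x).2
  have hp₀id : ∀ w ∈ W, p₀ w = w := by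
    intro w hw
    have := Submodule.linearProjOfIsCompl_apply_left hcompl ⟨w, hw⟩
    simp only [hp₀, LinearMap.comp_apply, hq]
    rw [show w = ((⟨w, hw⟩ : W) : V) from rfl, this]
    rfl
  set π : V →ₗ[F] V := (m : F)⁻¹ • (∑ j ∈ Finset.range m, (ψ ^ j) * p₀ * (χ ^ j)) with hπ
  have hπapply : ∀ x : V, π x = (m : F)⁻¹ • ∑ j ∈ Finset.range m, (ψ ^ j) (p₀ ((χ ^ j) x)) := by
    intro x
    simp [hπ, LinearMap.sum_apply, Module.End.mul_apply]
  have hπW : ∀ x : V, π x ∈ W := by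
    intro x
    rw [hπapply]
    exact W.smul_mem _ (W.sum_mem fun j _ => hWψpow j _ (hp₀W _))
  have hπid : ∀ w ∈ W, π w = w := by
    intro w hw
    rw [hπapply]
    have : ∀ j ∈ Finset.range m, (ψ ^ j) (p₀ ((χ ^ j) w)) = w := by
      intro j _
      rw [hp₀id _ (hWχpow j w hw), ← Module.End.mul_apply, hψjχj j, Module.End.one_apply]
    rw [Finset.sum_congr rfl this, Finset.sum_const, Finset.card_range,
      ← Nat.cast_smul_eq_nsmul F m w, smul_smul, inv_mul_cancel₀ hmF, one_smul]
  have hop : ψ * π * χ = π := by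
    rw [hπ]
    rw [mul_smul_comm, smul_mul_assoc]
    congr 1
    rw [Finset.mul_sum, Finset.sum_mul]
    have hterm : ∀ j : ℕ,
        ψ * ((ψ ^ j) * p₀ * (χ ^ j)) * χ = (ψ ^ (j+1)) * p₀ * (χ ^ (j+1)) := by
      intro j
      rw [pow_succ' ψ j, pow_succ χ j]
      simp only [mul_assoc]
    rw [Finset.sum_congr rfl fun j _ => hterm j]
    have hg : (ψ ^ m) * p₀ * (χ ^ m) = (ψ ^ 0) * p₀ * (χ ^ 0) := by
      rw [hψm, hχm, pow_zero, pow_zero]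
    exact hsum_shift (fun j => (ψ ^ j) * p₀ * (χ ^ j)) hg
  have hπψ : π * ψ = ψ * π := by
    calc π * ψ = (ψ * π * χ) * ψ := by rw [hop]
      _ = ψ * π * (χ * ψ) := by rw [mul_assoc]
      _ = ψ * π := by rw [hχψ, mul_one]
  refine ⟨LinearMap.ker π, ?_, ?_, ?_⟩
  · intro y hy
    rw [LinearMap.mem_ker] at hy ⊢
    have := congrArg (fun f : V →ₗ[F] V => f y) hπψ
    simp only [Module.End.mul_apply] at this
    rw [this, hy, map_zero]
  · rw [eq_bot_iff]
    rintro y ⟨hyW, hyK⟩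
    rw [SetLike.mem_coe, LinearMap.mem_ker] at hyK
    have := hπid y hyW
    rw [hyK] at this
    simpa using this.symm
  · rw [eq_top_iff]
    intro y _
    have h1 : π y ∈ W := hπW y
    have h2 : y - π y ∈ LinearMap.ker π := by
      rw [LinearMap.mem_ker, map_sub, hπid _ h1, sub_self]
    have : y = π y + (y - π y) := by abel
    rw [this]
    exact Submodule.add_mem_sup h1 h2


/-- A toral subalgebra: commutative and spanned by toral elements (`pOp x = x`),
where `pOp` is the `p`-operation of the restricted Lie algebra. -/
def IsToral {k L : Type*} [Field k] [LieRing L] [LieAlgebra k L]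
    (pOp : L → L) (S : Submodule k L) : Prop :=
  (∀ x ∈ S, ∀ y ∈ S, ⁅x, y⁆ = (0 : L)) ∧
  ∃ B : Set L, B ⊆ (S : Set L) ∧ (∀ x ∈ B, pOp x = x) ∧ Submodule.span k B = S

set_option maxHeartbeats 2000000 in
/-- Let `θ` be an automorphism of a reductive group `G` of finite order
`m` with `p ∤ m`, and `T` a `θ`-stable torus with `𝔱 = Lie T`, `𝔱' = Lie (T ∩ G^(1))`.
Then there is a `dθ`-stable toral subalgebra `𝔰` with `𝔱 = 𝔱' ⊕ 𝔰`.  Moreover, if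
`m ∣ p − 1`, then `𝔰` admits a basis of toral elements which are eigenvectors of `dθ`.
(Formalized at the Lie algebra level: `φ = dθ` is a restricted automorphism of order
dividing `m`, `t = 𝔱` and `t' = 𝔱'` are `φ`-stable toral subalgebras with `t' ≤ t`,
and `pOp` is the `p`-operation, Frobenius-semilinear on commuting elements.) -/
theorem stmt3 {k L : Type*} [Field k] [IsAlgClosed k] (p : ℕ) [CharP k p] (hp : p.Prime)
    [LieRing L] [LieAlgebra k L] [FiniteDimensional k L]
    (pOp : L → L)
    (hpAdd : ∀ x y : L, ⁅x, y⁆ = 0 → pOp (x + y) = pOp x + pOp y)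
    (hpSmul : ∀ (c : k) (x : L), pOp (c • x) = c ^ p • pOp x)
    (m : ℕ) (hm : 0 < m) (hpm : ¬ p ∣ m)
    (φ : L ≃ₗ[k] L) (hφord : ∀ x, (φ ^ m) x = x)
    (hφp : ∀ x, pOp (φ x) = φ (pOp x))
    (t t' : Submodule k L)
    (ht : IsToral pOp t) (ht' : IsToral pOp t') (ht't : t' ≤ t)
    (hφt : ∀ x ∈ t, φ x ∈ t) (hφt' : ∀ x ∈ t', φ x ∈ t') :
    ∃ s : Submodule k L, IsToral pOp s ∧ (∀ x ∈ s, φ x ∈ s) ∧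
      t' ⊓ s = ⊥ ∧ t' ⊔ s = t ∧
      (m ∣ p - 1 →
        ∃ B : Set L, B ⊆ (s : Set L) ∧ (∀ x ∈ B, pOp x = x) ∧
          (∀ x ∈ B, ∃ c : k, φ x = c • x) ∧
          Submodule.span k B = s ∧ LinearIndependent k (fun b : B => (b : L))) := by
  classical
  haveI : Fact p.Prime := ⟨hp⟩
  have hp0 : p ≠ 0 := hp.pos.ne'
  set F : Subfield k := frobFixed k p with hFdef
  have hF : ∀ c : k, c ∈ F ↔ c ^ p = c := fun c => Iff.rfl
  have habel := ht.1
  have h0 : pOp 0 = 0 := pOp_zero p hp0 pOp hpSmul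
  -- the 𝔽_p-points of t and t'
  have smul_closed : ∀ (u : Submodule k L) (c : F) (x : L),
      x ∈ u ∧ pOp x = x → c • x ∈ u ∧ pOp (c • x) = c • x := by
    rintro u ⟨c, hc⟩ x ⟨hxu, hxp⟩
    rw [Subfield.smul_def]
    refine ⟨u.smul_mem _ hxu, ?_⟩
    rw [hpSmul, hxp]
    have : c ^ p = c := hc
    rw [this]
  have add_closed : ∀ x y : L, x ∈ t → y ∈ t → pOp x = x → pOp y = y →
      pOp (x + y) = x + y := by
    intro x y hx hy hpx hpy
    rw [hpAdd x y (habel x hx y hy), hpx, hpy]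
  set T : Submodule F L :=
    { carrier := {x | x ∈ t ∧ pOp x = x}
      add_mem' := by
        rintro x y ⟨hxt, hxp⟩ ⟨hyt, hyp⟩
        exact ⟨t.add_mem hxt hyt, add_closed x y hxt hyt hxp hyp⟩
      zero_mem' := ⟨t.zero_mem, h0⟩
      smul_mem' := fun c x hx => smul_closed t c x hx } with hTdef
  have hmemT : ∀ x : L, x ∈ T ↔ x ∈ t ∧ pOp x = x := fun _ => Iff.rfl
  set T' : Submodule F L :=
    { carrier := {x | x ∈ t' ∧ pOp x = x}
      add_mem' := by
        rintro x y ⟨hxt, hxp⟩ ⟨hyt, hyp⟩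
        exact ⟨t'.add_mem hxt hyt, add_closed x y (ht't hxt) (ht't hyt) hxp hyp⟩
      zero_mem' := ⟨t'.zero_mem, h0⟩
      smul_mem' := fun c x hx => smul_closed t' c x hx } with hT'def
  have hmemT' : ∀ x : L, x ∈ T' ↔ x ∈ t' ∧ pOp x = x := fun _ => Iff.rfl
  have hT'T : T' ≤ T := by
    rintro x ⟨h1, h2⟩
    exact ⟨ht't h1, h2⟩
  -- spans
  have hspanT : Submodule.span k (T : Set L) = t := by
    refine le_antisymm (Submodule.span_le.mpr fun x hx => hx.1) ?_
    obtain ⟨-, B, hBsub, hBtor, hBspan⟩ := ht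
    rw [← hBspan]
    exact Submodule.span_mono fun x hx => ⟨hBsub hx, hBtor x hx⟩
  have hspanT' : Submodule.span k (T' : Set L) = t' := by
    refine le_antisymm (Submodule.span_le.mpr fun x hx => hx.1) ?_
    obtain ⟨-, B, hBsub, hBtor, hBspan⟩ := ht'
    rw [← hBspan]
    exact Submodule.span_mono fun x hx => ⟨hBsub hx, hBtor x hx⟩
  -- the restriction of φ to T
  have hTφ : ∀ x : L, x ∈ T → φ x ∈ T := by
    rintro x ⟨h1, h2⟩
    exact ⟨hφt x h1, by rw [hφp, h2]⟩
  have hT'φ : ∀ x : L, x ∈ T' → φ x ∈ T' := by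
    rintro x ⟨h1, h2⟩
    exact ⟨hφt' x h1, by rw [hφp, h2]⟩
  have hφmul : ∀ (a b : L ≃ₗ[k] L) (x : L), (a * b) x = a (b x) := fun _ _ _ => rfl
  set φF : L →ₗ[F] L := ((φ : L →ₗ[k] L).restrictScalars F) with hφFdef
  set ψ : ↥T →ₗ[F] ↥T := φF.restrict (p := T) (q := T) (fun x hx => hTφ x hx) with hψdef
  have hψapply : ∀ x : ↥T, ((ψ x : L)) = φ x := fun _ => rfl
  have hψpow : ∀ (j : ℕ) (x : ↥T), (((ψ ^ j) x : L)) = (φ ^ j) (x : L) := by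
    intro j
    induction j with
    | zero => intro x; rw [pow_zero, pow_zero, Module.End.one_apply]; rfl
    | succ j ih =>
        intro x
        rw [pow_succ, Module.End.mul_apply, pow_succ, hφmul, ← hψapply x, ih (ψ x)]
  have hψm : ψ ^ m = 1 := by
    apply LinearMap.ext
    intro x
    apply Subtype.ext
    rw [hψpow, hφord, Module.End.one_apply]
  have hmk : (m : k) ≠ 0 := by
    intro h
    exact hpm ((CharP.cast_eq_zero_iff k p m).mp h)
  have hmF : (m : F) ≠ 0 := by
    intro h
    apply hmk
    have : ((m : F) : k) = ((0 : F) : k) := by rw [h]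
    simpa using this
  -- Maschke over the prime field
  set W : Submodule F ↥T := Submodule.comap T.subtype T' with hWdef
  have hWψ : ∀ w ∈ W, ψ w ∈ W := by
    intro w hw
    have : (w : L) ∈ T' := hw
    exact hT'φ _ this
  obtain ⟨S', hS'ψ, hinf, hsup⟩ := maschke_cyclic m hm hmF ψ hψm W hWψ
  set S₀ : Submodule F L := S'.map T.subtype with hS₀def
  have hS₀T : S₀ ≤ T := by
    rintro x ⟨y, hy, rfl⟩
    exact y.2
  have hS₀φ : ∀ x ∈ S₀, φ x ∈ S₀ := by
    rintro x ⟨y, hy, rfl⟩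
    exact ⟨ψ y, hS'ψ y hy, rfl⟩
  have hT'S₀inf : T' ⊓ S₀ = ⊥ := by
    rw [eq_bot_iff]
    rintro x ⟨hxT', hxS₀⟩
    obtain ⟨y, hyS', rfl⟩ := hxS₀
    have hyW : y ∈ W := hxT'
    have : y ∈ W ⊓ S' := ⟨hyW, hyS'⟩
    rw [hinf] at this
    simp only [Submodule.mem_bot] at this
    rw [this]
    rfl
  have hT'S₀sup : T' ⊔ S₀ = T := by
    have hmap := congrArg (Submodule.map T.subtype) hsup
    rw [Submodule.map_sup, Submodule.map_comap_subtype, Submodule.map_subtype_top] at hmap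
    rw [inf_eq_right.mpr hT'T] at hmap
    exact hmap
  -- the complement over k
  set s : Submodule k L := Submodule.span k (S₀ : Set L) with hsdef
  have hS₀s : (S₀ : Set L) ⊆ s := Submodule.subset_span
  have hsle : s ≤ t := Submodule.span_le.mpr fun x hx => (hS₀T hx).1
  have hstoral : IsToral pOp s := by
    refine ⟨fun x hx y hy => habel x (hsle hx) y (hsle hy), (S₀ : Set L), hS₀s, ?_, rfl⟩
    intro x hx
    exact (hS₀T hx).2
  have hφs : ∀ x ∈ s, φ x ∈ s := by
    intro x hx
    have h1 : Submodule.map (φ : L →ₗ[k] L) s = Submodule.span k ((φ : L →ₗ[k] L) '' S₀) := by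
      rw [hsdef, Submodule.map_span]
    have h2 : Submodule.span k ((φ : L →ₗ[k] L) '' (S₀ : Set L)) ≤ s := by
      rw [hsdef]
      apply Submodule.span_mono
      rintro z ⟨w, hw, rfl⟩
      exact hS₀φ w hw
    have h3 : φ x ∈ Submodule.map (φ : L →ₗ[k] L) s := ⟨x, hx, rfl⟩
    exact h2 (h1 ▸ h3)
  have hsup_k : t' ⊔ s = t := by
    refine le_antisymm (sup_le ht't hsle) ?_
    rw [← hspanT]
    apply Submodule.span_le.mpr
    intro x hx
    have hxTS : x ∈ T' ⊔ S₀ := by rw [hT'S₀sup]; exact hx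
    obtain ⟨a, ha, b, hb, rfl⟩ := Submodule.mem_sup.mp hxTS
    exact Submodule.add_mem _ (Submodule.mem_sup_left ha.1) (Submodule.mem_sup_right (hS₀s hb))
  -- disjointness via descent
  obtain ⟨C', hC'sub, hC'span, hC'li⟩ := exists_linearIndependent F (T' : Set L)
  obtain ⟨C₀, hC₀sub, hC₀span, hC₀li⟩ := exists_linearIndependent F (S₀ : Set L)
  rw [Submodule.span_eq] at hC'span hC₀span
  have hdisjsets : Disjoint C' C₀ := by
    rw [Set.disjoint_left]
    intro z hz1 hz2
    have hz0 : z ∈ T' ⊓ S₀ := ⟨hC'sub hz1, hC₀sub hz2⟩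
    rw [hT'S₀inf] at hz0
    simp only [Submodule.mem_bot] at hz0
    exact hC'li.ne_zero ⟨z, hz1⟩ (by simpa using hz0)
  have hFunion : LinearIndependent F (fun x : ↥(C' ∪ C₀) => (x : L)) := by
    apply LinearIndepOn.id_union hC'li hC₀li
    rw [hC'span, hC₀span]
    exact disjoint_iff.mpr hT'S₀inf
  have hkunion : LinearIndependent k (fun x : ↥(C' ∪ C₀) => (x : L)) := by
    refine descent p hp0 pOp hpAdd hpSmul t habel F hF _ ?_ ?_ hFunion
    · rintro ⟨i, hi | hi⟩
      · exact (hT'T (hC'sub hi)).1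
      · exact (hS₀T (hC₀sub hi)).1
    · rintro ⟨i, hi | hi⟩
      · exact (hT'T (hC'sub hi)).2
      · exact (hS₀T (hC₀sub hi)).2
  have hinf_k : t' ⊓ s = ⊥ := by
    have hspanC' : Submodule.span k C' = t' := by
      have := Submodule.span_span_of_tower (R := F) (S := k) (s := C')
      rw [hC'span] at this
      rw [← this, hspanT']
    have hspanC₀ : Submodule.span k C₀ = s := by
      have := Submodule.span_span_of_tower (R := F) (S := k) (s := C₀)
      rw [hC₀span] at this
      rw [← this, hsdef]
    have hdisjk : Disjoint (Submodule.span k C') (Submodule.span k C₀) := by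
      have him1 : (fun x : ↥(C' ∪ C₀) => (x : L)) '' (Subtype.val ⁻¹' C') = C' := by
        ext z
        constructor
        · rintro ⟨i, hi, rfl⟩; exact hi
        · intro hz; exact ⟨⟨z, Or.inl hz⟩, hz, rfl⟩
      have him2 : (fun x : ↥(C' ∪ C₀) => (x : L)) '' (Subtype.val ⁻¹' C₀) = C₀ := by
        ext z
        constructor
        · rintro ⟨i, hi, rfl⟩; exact hi
        · intro hz; exact ⟨⟨z, Or.inr hz⟩, hz, rfl⟩
      have hpre : Disjoint (Subtype.val ⁻¹' C' : Set ↥(C' ∪ C₀)) (Subtype.val ⁻¹' C₀) := by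
        rw [Set.disjoint_left]
        intro i hi1 hi2
        exact Set.disjoint_left.mp hdisjsets hi1 hi2
      have := hkunion.disjoint_span_image hpre
      rwa [him1, him2] at this
    rw [← hspanC', ← hspanC₀]
    exact disjoint_iff.mp hdisjk
  refine ⟨s, hstoral, hφs, hinf_k, hsup_k, ?_⟩
  intro hmdvd
  have hp1 : p - 1 ≠ 0 := by have := hp.two_le; omega
  obtain ⟨g, hg⟩ := IsCyclic.exists_ofOrder_eq_natCard (α := (ZMod p)ˣ)
  have hcard : Nat.card (ZMod p)ˣ = p - 1 := by
    rw [Nat.card_eq_fintype_card, ZMod.card_units]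
  set u : (ZMod p)ˣ := g ^ ((p-1)/m) with hu
  have horder : orderOf u = m := by
    rw [hu, orderOf_pow, hg, hcard, Nat.gcd_eq_right (Nat.div_dvd_of_dvd hmdvd),
      Nat.div_div_self hmdvd hp1]
  set ρ : ZMod p →+* k := ZMod.castHom dvd_rfl k with hρ
  have hρinj : Function.Injective ρ := ρ.injective
  set ζ : k := ρ ((u : ZMod p)) with hζ
  have hζm : ζ ^ m = 1 := by
    rw [hζ, ← map_pow]
    have h1 : ((u : ZMod p)) ^ m = 1 := by
      rw [← Units.val_pow_eq_pow_val, ← horder, pow_orderOf_eq_one, Units.val_one]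
    rw [h1, map_one]
  have hζj : ∀ j : ℕ, 0 < j → j < m → ζ ^ j ≠ 1 := by
    intro j hj1 hj2 h
    have h1 : ((u : ZMod p)) ^ j = 1 := by
      apply hρinj
      rw [map_pow, map_one]
      exact h
    have h2 : u ^ j = 1 := Units.ext (by rw [Units.val_pow_eq_pow_val, h1, Units.val_one])
    have h3 := orderOf_dvd_of_pow_eq_one h2
    rw [horder] at h3
    exact absurd (Nat.le_of_dvd hj1 h3) (not_le.mpr hj2)
  have hζF : ζ ∈ F := by
    rw [hF, hζ, ← map_pow, ZMod.pow_card]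
  set η : k := ζ ^ (m-1) with hη
  have hηF : η ∈ F := by rw [hη]; exact pow_mem hζF _
  have hm1 : m - 1 + 1 = m := Nat.succ_pred_eq_of_pos hm
  have hζη : ζ * η = 1 := by rw [hη, ← pow_succ', hm1, hζm]
  have hηm : η ^ m = 1 := by rw [hη, ← pow_mul, mul_comm, pow_mul, hζm, one_pow]
  have hηj : ∀ j : ℕ, 0 < j → j < m → η ^ j ≠ 1 := by
    intro j hj1 hj2 h
    apply hζj j hj1 hj2
    have h1 : (ζ * η) ^ j = 1 := by rw [hζη, one_pow]
    rwa [mul_pow, h, mul_one] at h1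
  have hφ0 : ∀ z : L, (φ ^ 0) z = z := fun z => rfl
  have hφpowS₀ : ∀ (j : ℕ) (x : L), x ∈ S₀ → (φ ^ j) x ∈ S₀ := by
    intro j
    induction j with
    | zero => intro x hx; rw [hφ0]; exact hx
    | succ j ih =>
        intro x hx
        rw [pow_succ', hφmul]
        exact hS₀φ _ (ih x hx)
  have hsum_shiftL : ∀ (g : ℕ → L), g m = g 0 →
      (∑ j ∈ Finset.range m, g (j+1)) = ∑ j ∈ Finset.range m, g j := by
    intro g hg
    conv_lhs => rw [← hm1, Finset.sum_range_succ]
    conv_rhs => rw [← hm1, Finset.sum_range_succ']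
    rw [hm1, hg]
  set E : Set L := {y : L | y ∈ S₀ ∧ ∃ c : k, φ y = c • y} with hE
  have hdecomp : ∀ x ∈ S₀, x ∈ Submodule.span F E := by
    intro x hx
    set y : ℕ → L := fun i => ∑ j ∈ Finset.range m, ((m:k)⁻¹ * η^(i*j)) • (φ^j) x with hy
    have hymem : ∀ i, y i ∈ S₀ := by
      intro i
      rw [hy]
      apply Submodule.sum_mem
      intro j _
      have hcF : ((m:k)⁻¹ * η^(i*j)) ∈ F :=
        mul_mem (F.inv_mem (natCast_mem F m)) (pow_mem hηF _)
      have := S₀.smul_mem (⟨_, hcF⟩ : F) (hφpowS₀ j x hx)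
      rwa [Subfield.smul_def] at this
    have hyeig : ∀ i, φ (y i) = ζ^i • y i := by
      intro i
      have h1 : ζ^i * η^i = 1 := by rw [← mul_pow, hζη, one_pow]
      have hcoef : ∀ j : ℕ, ζ^i * ((m:k)⁻¹ * η^(i*(j+1))) = (m:k)⁻¹ * η^(i*j) := by
        intro j
        calc ζ^i * ((m:k)⁻¹ * η^(i*(j+1)))
            = ((m:k)⁻¹ * η^(i*j)) * (ζ^i * η^i) := by rw [Nat.mul_succ, pow_add]; ring
          _ = (m:k)⁻¹ * η^(i*j) := by rw [h1, mul_one]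
      have hL : φ (y i) = ∑ j ∈ Finset.range m, ((m:k)⁻¹ * η^(i*j)) • (φ^(j+1)) x := by
        rw [hy, map_sum]
        refine Finset.sum_congr rfl fun j _ => ?_
        rw [map_smul, pow_succ', hφmul]
      have hR : ζ^i • y i = ∑ j ∈ Finset.range m, (ζ^i * ((m:k)⁻¹ * η^(i*j))) • (φ^j) x := by
        rw [hy, Finset.smul_sum]
        exact Finset.sum_congr rfl fun j _ => by rw [smul_smul]
      rw [hL, hR]
      have hcongr : ∀ j ∈ Finset.range m, ((m:k)⁻¹ * η^(i*j)) • (φ^(j+1)) x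
          = (ζ^i * ((m:k)⁻¹ * η^(i*(j+1)))) • (φ^(j+1)) x := fun j _ => by rw [hcoef j]
      rw [Finset.sum_congr rfl hcongr]
      apply hsum_shiftL (fun j => (ζ^i * ((m:k)⁻¹ * η^(i*j))) • (φ^j) x)
      have h2 : η^(i*m) = 1 := by rw [mul_comm, pow_mul, hηm, one_pow]
      have h3 : (φ^m) x = x := hφord x
      show (ζ^i * ((m:k)⁻¹ * η^(i*m))) • (φ^m) x = (ζ^i * ((m:k)⁻¹ * η^(i*0))) • (φ^0) x
      rw [h2, h3, Nat.mul_zero, pow_zero, hφ0]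
    have hysum : (∑ i ∈ Finset.range m, y i) = x := by
      calc ∑ i ∈ Finset.range m, y i
          = ∑ i ∈ Finset.range m, ∑ j ∈ Finset.range m, ((m:k)⁻¹ * η^(i*j)) • (φ^j) x :=
            Finset.sum_congr rfl fun i _ => by rw [hy]
        _ = ∑ j ∈ Finset.range m, ∑ i ∈ Finset.range m, ((m:k)⁻¹ * η^(i*j)) • (φ^j) x :=
            Finset.sum_comm
        _ = ∑ j ∈ Finset.range m, ((m:k)⁻¹ * (∑ i ∈ Finset.range m, (η^j)^i)) • (φ^j) x := by
            refine Finset.sum_congr rfl fun j _ => ?_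
            rw [Finset.mul_sum, Finset.sum_smul]
            refine Finset.sum_congr rfl fun i _ => ?_
            congr 2
            rw [mul_comm i j]
            exact pow_mul η j i
        _ = x := by
            rw [Finset.sum_eq_single_of_mem 0 (Finset.mem_range.mpr hm)]
            · simp only [pow_zero, one_pow, Finset.sum_const, Finset.card_range,
                nsmul_eq_mul, mul_one]
              rw [inv_mul_cancel₀ hmk, one_smul]
              rfl
            · intro j hj hj0
              have h0 : (∑ i ∈ Finset.range m, ((η:k)^j)^i) = 0 := by
                rw [geom_sum_eq (hηj j (Nat.pos_of_ne_zero hj0) (Finset.mem_range.mp hj))]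
                have hjm : ((η:k)^j)^m = 1 := by rw [← pow_mul, mul_comm, pow_mul, hηm, one_pow]
                rw [hjm, sub_self, zero_div]
              rw [h0, mul_zero, zero_smul]
    rw [← hysum]
    apply Submodule.sum_mem
    intro i _
    exact Submodule.subset_span ⟨hymem i, ζ^i, hyeig i⟩
  have hES : Submodule.span F E = S₀ :=
    le_antisymm (Submodule.span_le.mpr fun y hy => hy.1) hdecomp
  obtain ⟨B, hBE, hBspan, hBli⟩ := exists_linearIndependent F E
  rw [hES] at hBspan
  refine ⟨B, ?_, ?_, ?_, ?_, ?_⟩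
  · exact fun z hz => hS₀s (hBE hz).1
  · intro z hz
    exact (hS₀T ((hBE hz).1)).2
  · intro z hz
    exact (hBE hz).2
  · have hsp := Submodule.span_span_of_tower (R := F) (S := k) (s := B)
    rw [hBspan] at hsp
    rw [hsdef]
    exact hsp.symm
  · refine descent p hp0 pOp hpAdd hpSmul t habel F hF _ ?_ ?_ hBli
    · rintro ⟨z, hz⟩
      exact (hS₀T ((hBE hz).1)).1
    · rintro ⟨z, hz⟩
      exact (hS₀T ((hBE hz).1)).2
end

section
/- Let V be a finite-dimensional vector space over a field k of characteristic ≠ 2, equipped with a non-degenerate symmetric bilinear form κ and a direct sum decomposition V = V₊ ⊕ V₋ with κ(V₊, V₋) = 0. Let ω be an alternating bilinear form on V such that ω(V₊,V₊) = 0 and ω(V₋,V₋) = 0, with radical R = R₊ ⊕ R₋ where R₊ = R ∩ V₊, R₋ = R ∩ V₋. Then dim V₊ − dim R₊ = dim V₋ − dim R₋. -/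
section aux
variable {k V : Type*} [Field k] [AddCommGroup V] [Module k V] [FiniteDimensional k V]

lemma rank_flip_aux {M N : Type*} [AddCommGroup M] [Module k M] [FiniteDimensional k M]
    [AddCommGroup N] [Module k N] [FiniteDimensional k N] (B : M →ₗ[k] N →ₗ[k] k) :
    Module.finrank k ↥(LinearMap.range B.flip) = Module.finrank k ↥(LinearMap.range B) := by
  have h : B.flip = B.dualMap.comp (Module.Dual.eval k N) := by
    ext y x; rfl
  have hsurj : Function.Surjective (Module.Dual.eval k N) := by
    rw [← Module.evalEquiv_toLinearMap]
    exact (Module.evalEquiv k N).surjective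
  rw [h, LinearMap.range_comp_of_range_eq_top _ (LinearMap.range_eq_top.mpr hsurj),
    LinearMap.finrank_range_dualMap_eq_finrank_range]
end aux

/-- Let `V` be a finite-dimensional vector space over a field `k` of
characteristic `≠ 2` with a non-degenerate symmetric bilinear form `κ` and a direct sum
decomposition `V = V₊ ⊕ V₋` with `κ(V₊, V₋) = 0`.  Let `ω` be an alternating bilinear
form vanishing on `V₊ × V₊` and on `V₋ × V₋`, whose radical `R = ker ω` decomposes as
`R = (R ⊓ V₊) ⊔ (R ⊓ V₋)`.  Then `dim V₊ − dim R₊ = dim V₋ − dim R₋`. -/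
theorem stmt12 {k V : Type*} [Field k] (hchar : (2 : k) ≠ 0)
    [AddCommGroup V] [Module k V] [FiniteDimensional k V]
    (κ : V →ₗ[k] V →ₗ[k] k)
    (hκsymm : ∀ x y, κ x y = κ y x)
    (hκnd : ∀ x, (∀ y, κ x y = 0) → x = 0)
    (Vp Vm : Submodule k V) (hcompl : IsCompl Vp Vm)
    (hκ0 : ∀ x ∈ Vp, ∀ y ∈ Vm, κ x y = 0)
    (ω : V →ₗ[k] V →ₗ[k] k)
    (halt : ∀ x, ω x x = 0)
    (hωp : ∀ x ∈ Vp, ∀ y ∈ Vp, ω x y = 0)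
    (hωm : ∀ x ∈ Vm, ∀ y ∈ Vm, ω x y = 0)
    (hRdec : LinearMap.ker ω = (LinearMap.ker ω ⊓ Vp) ⊔ (LinearMap.ker ω ⊓ Vm)) :
    (Module.finrank k ↥Vp : ℤ) - Module.finrank k ↥(LinearMap.ker ω ⊓ Vp) =
      (Module.finrank k ↥Vm : ℤ) - Module.finrank k ↥(LinearMap.ker ω ⊓ Vm) := by
  have hskew : ∀ x y, ω y x = - ω x y := by
    intro x y
    have := halt (x + y)
    simp only [map_add, LinearMap.add_apply, halt] at this
    linear_combination this
  set B : ↥Vp →ₗ[k] ↥Vm →ₗ[k] k := ω.compl₁₂ Vp.subtype Vm.subtype with hB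
  -- decomposition lemma
  have hdecomp : ∀ v : V, ∃ p ∈ Vp, ∃ m ∈ Vm, v = p + m := by
    intro v
    have : v ∈ Vp ⊔ Vm := by rw [hcompl.sup_eq_top]; trivial
    obtain ⟨p, hp, m, hm, h⟩ := Submodule.mem_sup.mp this
    exact ⟨p, hp, m, hm, h.symm⟩
  have hkerB : LinearMap.ker B = Submodule.comap Vp.subtype (LinearMap.ker ω ⊓ Vp) := by
    ext ⟨x, hx⟩
    simp only [LinearMap.mem_ker, Submodule.mem_comap, Submodule.subtype_apply,
      Submodule.mem_inf, hx, and_true]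
    constructor
    · intro h
      ext v
      obtain ⟨p, hp, m, hm, rfl⟩ := hdecomp v
      have h1 : ω x p = 0 := hωp x hx p hp
      have h2 : ω x m = 0 := by
        have := congrFun (congrArg (DFunLike.coe) h) ⟨m, hm⟩
        simpa [hB, LinearMap.compl₁₂_apply] using this
      simp [h1, h2]
    · intro h
      ext ⟨m, hm⟩
      simp [hB, LinearMap.compl₁₂_apply, h]
  have hkerBf : LinearMap.ker B.flip = Submodule.comap Vm.subtype (LinearMap.ker ω ⊓ Vm) := by
    ext ⟨y, hy⟩
    simp only [LinearMap.mem_ker, Submodule.mem_comap, Submodule.subtype_apply,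
      Submodule.mem_inf, hy, and_true]
    constructor
    · intro h
      ext v
      obtain ⟨p, hp, m, hm, rfl⟩ := hdecomp v
      have h1 : ω y m = 0 := hωm y hy m hm
      have h2 : ω y p = 0 := by
        have := congrFun (congrArg (DFunLike.coe) h) ⟨p, hp⟩
        simp only [LinearMap.flip_apply, hB, LinearMap.compl₁₂_apply,
          Submodule.subtype_apply] at this
        rw [hskew]
        simp [this]
      simp [h1, h2]
    · intro h
      ext ⟨p, hp⟩
      simp only [hB, LinearMap.flip_apply, LinearMap.compl₁₂_apply,
        Submodule.subtype_apply, LinearMap.zero_apply]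
      rw [hskew y p]
      simp [h]
  have e1 : Module.finrank k ↥(LinearMap.ker B) =
      Module.finrank k ↥(LinearMap.ker ω ⊓ Vp) := by
    rw [hkerB]
    exact (Submodule.comapSubtypeEquivOfLe inf_le_right).finrank_eq
  have e2 : Module.finrank k ↥(LinearMap.ker B.flip) =
      Module.finrank k ↥(LinearMap.ker ω ⊓ Vm) := by
    rw [hkerBf]
    exact (Submodule.comapSubtypeEquivOfLe inf_le_right).finrank_eq
  have r1 := B.finrank_range_add_finrank_ker
  have r2 := B.flip.finrank_range_add_finrank_ker
  have hr := rank_flip_aux (k := k) B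
  rw [e1] at r1; rw [e2, hr] at r2
  omega
end
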